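/- arXiv:2407.02776 — 2 statements merged into one kernel-verified Lean document; each statement's English description precedes it below -/
import Mathlib

section
/- For 0 < θ, φ < π/2 and integer k ≥ 0, let ε_k = C_k^{-1}·(cos θ · sin θ · cos^k φ · (1 − cos φ))², with C_k = cos^{2k}(φ)cos²θ + sin²θ. Then 0 < ε_k < 1, and for every j ≠ k, C_k^{-1}·((cos^k φ − cos^j φ) cos θ sin θ)² ≥ ε_k. -/
open Real

theorem error_margin_bound (θ φ : ℝ) (hθ : 0 < θ) (hθ' : θ < π / 2)
    (hφ : 0 < φ) (hφ' : φ < π / 2) (k : ℕ) :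
    let C : ℝ := cos φ ^ (2 * k) * cos θ ^ 2 + sin θ ^ 2
    let ε : ℝ := C⁻¹ * (cos θ * sin θ * cos φ ^ k * (1 - cos φ)) ^ 2
    0 < ε ∧ ε < 1 ∧
      ∀ j : ℕ, j ≠ k →
        C⁻¹ * ((cos φ ^ k - cos φ ^ j) * cos θ * sin θ) ^ 2 ≥ ε := by
  intro C ε
  have hc : 0 < cos φ := Real.cos_pos_of_mem_Ioo ⟨by linarith [Real.pi_pos], hφ'⟩
  have hsφ : 0 < sin φ := Real.sin_pos_of_pos_of_lt_pi hφ (by linarith [Real.pi_pos])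
  have hc1 : cos φ < 1 := by nlinarith [Real.sin_sq_add_cos_sq φ]
  have ht : 0 < cos θ := Real.cos_pos_of_mem_Ioo ⟨by linarith [Real.pi_pos], hθ'⟩
  have hs : 0 < sin θ := Real.sin_pos_of_pos_of_lt_pi hθ (by linarith [Real.pi_pos])
  have hs1 : sin θ < 1 := by nlinarith [Real.sin_sq_add_cos_sq θ]
  have hC : 0 < C := by positivity
  have hε : 0 < ε := by
    have h1 : 0 < 1 - cos φ := by linarith
    positivity
  refine ⟨hε, ?_, ?_⟩
  · have key : (cos θ * sin θ * cos φ ^ k * (1 - cos φ)) ^ 2 < C := by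
      have hck : 0 < cos φ ^ k := by positivity
      have h1 : (1 - cos φ) ^ 2 < 1 := by nlinarith
      have h2 : (cos θ * sin θ * cos φ ^ k * (1 - cos φ)) ^ 2
          < cos θ ^ 2 * cos φ ^ (2 * k) := by
        have : (cos θ * sin θ * cos φ ^ k * (1 - cos φ)) ^ 2
            = cos θ ^ 2 * cos φ ^ (2 * k) * (sin θ ^ 2 * (1 - cos φ) ^ 2) := by
          rw [pow_mul]; ring
        rw [this]
        have hpos : 0 < cos θ ^ 2 * cos φ ^ (2 * k) := by positivity
        have : sin θ ^ 2 * (1 - cos φ) ^ 2 < 1 := by nlinarith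
        nlinarith
      have : cos θ ^ 2 * cos φ ^ (2 * k) ≤ C := by
        simp only [C]; nlinarith
      linarith
    rw [show ε = C⁻¹ * (cos θ * sin θ * cos φ ^ k * (1 - cos φ)) ^ 2 from rfl]
    rw [inv_mul_lt_iff₀ hC, mul_one]
    exact key
  · intro j hj
    have habs : cos φ ^ k * (1 - cos φ) ≤ |cos φ ^ k - cos φ ^ j| := by
      rcases lt_or_gt_of_ne hj with h | h
      -- j < k
      · have h1 : cos φ ^ j - cos φ ^ k = cos φ ^ j * (1 - cos φ ^ (k - j)) := by
          rw [mul_sub, mul_one, ← pow_add]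
          congr 2
          omega
        have hkj : 1 ≤ k - j := by omega
        have h2 : cos φ ^ (k - j) ≤ cos φ := by
          calc cos φ ^ (k - j) ≤ cos φ ^ 1 :=
                pow_le_pow_of_le_one (le_of_lt hc) (le_of_lt hc1) hkj
            _ = cos φ := pow_one _
        have h3 : cos φ ^ k ≤ cos φ ^ j :=
          pow_le_pow_of_le_one (le_of_lt hc) (le_of_lt hc1) (by omega)
        rw [abs_sub_comm, abs_of_nonneg (by linarith)]
        rw [h1]
        have : cos φ ^ k * (1 - cos φ) ≤ cos φ ^ j * (1 - cos φ) := by nlinarith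
        have h4 : cos φ ^ j * (1 - cos φ) ≤ cos φ ^ j * (1 - cos φ ^ (k - j)) := by
          have : 0 < cos φ ^ j := by positivity
          nlinarith
        linarith
      -- j > k
      · have h1 : cos φ ^ k - cos φ ^ j = cos φ ^ k * (1 - cos φ ^ (j - k)) := by
          rw [mul_sub, mul_one, ← pow_add]
          congr 2
          omega
        have h2 : cos φ ^ (j - k) ≤ cos φ := by
          calc cos φ ^ (j - k) ≤ cos φ ^ 1 :=
                pow_le_pow_of_le_one (le_of_lt hc) (le_of_lt hc1) (by omega)
            _ = cos φ := pow_one _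
        have h3 : cos φ ^ j ≤ cos φ ^ k :=
          pow_le_pow_of_le_one (le_of_lt hc) (le_of_lt hc1) (by omega)
        rw [abs_of_nonneg (by linarith), h1]
        have : 0 < cos φ ^ k := by positivity
        nlinarith
    have hsq : (cos φ ^ k * (1 - cos φ)) ^ 2 ≤ (cos φ ^ k - cos φ ^ j) ^ 2 := by
      rw [← sq_abs (cos φ ^ k - cos φ ^ j)]
      have h0 : 0 ≤ cos φ ^ k * (1 - cos φ) := by
        have : 0 < cos φ ^ k := by positivity
        nlinarith
      exact pow_le_pow_left₀ h0 habs 2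
    have hCinv : 0 ≤ C⁻¹ := le_of_lt (inv_pos.mpr hC)
    rw [ge_iff_le, show ε = C⁻¹ * (cos θ * sin θ * cos φ ^ k * (1 - cos φ)) ^ 2 from rfl]
    apply mul_le_mul_of_nonneg_left _ hCinv
    nlinarith [sq_nonneg (cos θ * sin θ), mul_pos ht hs]
end

section
/- For 0 < θ, φ < π/2 and integer k ≥ 0, the full end-of-string rejection probability formula holds: with ψ_j = cos^j(φ)cos(θ)·e₀ + sin(θ)·e₁ and U_$ the 4×4 unitary (1/√C_k)·[[0, A_k†], [A_k, 0]] (in the ordered basis (e₀, e₁, e_acc, e_rej)) where A_k = [[cos^k φ cos θ, sin θ], [−sin θ, cos^k φ cos θ]] and C_k = cos^{2k}φ cos²θ + sin²θ, the squared norm of the e_rej-component of U_$·ψ_j equals C_k^{-1}·((cos^k φ − cos^j φ)·cos θ·sin θ)². -/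
open Real Matrix

lemma antidiagonalBlocks_mulVec_apply_three {R : Type*} [CommRing R] (a b x y : R) :
    (!![0, 0, a, -b;
        0, 0, b, a;
        a, b, 0, 0;
        -b, a, 0, 0] *ᵥ ![x, y, 0, 0]) 3 = a * y - b * x := by
  simp [mulVec, dotProduct, Fin.sum_univ_four, sub_eq_neg_add]

lemma sq_one_div_sqrt_mul {C : ℝ} (hC : 0 ≤ C) (x : ℝ) :
    (1 / √C * x) ^ 2 = C⁻¹ * x ^ 2 := by
  rw [mul_pow, div_pow, one_pow, sq_sqrt hC, one_div]

theorem rejection_probability_formula_general (θ φ : ℝ) (k : ℕ) :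
    let C : ℝ := cos φ ^ (2 * k) * cos θ ^ 2 + sin θ ^ 2
    let Udollar : Matrix (Fin 4) (Fin 4) ℝ :=
      (1 / Real.sqrt C) •
        !![0, 0, cos φ ^ k * cos θ, -sin θ;
           0, 0, sin θ, cos φ ^ k * cos θ;
           cos φ ^ k * cos θ, sin θ, 0, 0;
           -sin θ, cos φ ^ k * cos θ, 0, 0]
    ∀ j : ℕ,
      let ψ : Fin 4 → ℝ := ![cos φ ^ j * cos θ, sin θ, 0, 0]
      (Udollar.mulVec ψ 3) ^ 2 =
        C⁻¹ * ((cos φ ^ k - cos φ ^ j) * cos θ * sin θ) ^ 2 := by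
  intro C Udollar j ψ
  have hC : 0 ≤ C := by simp only [C, pow_mul]; positivity
  have amplitude : Udollar.mulVec ψ 3 =
      1 / √C * ((cos φ ^ k - cos φ ^ j) * cos θ * sin θ) := by
    rw [smul_mulVec, Pi.smul_apply, antidiagonalBlocks_mulVec_apply_three, smul_eq_mul]
    ring
  rw [amplitude, sq_one_div_sqrt_mul hC]

theorem rejection_probability_formula (θ φ : ℝ) (k : ℕ)
    (hθ : 0 < θ) (hθ' : θ < π / 2) (hφ : 0 < φ) (hφ' : φ < π / 2) :
    let C : ℝ := cos φ ^ (2 * k) * cos θ ^ 2 + sin θ ^ 2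
    let Udollar : Matrix (Fin 4) (Fin 4) ℝ :=
      (1 / Real.sqrt C) •
        !![0, 0, cos φ ^ k * cos θ, -sin θ;
           0, 0, sin θ, cos φ ^ k * cos θ;
           cos φ ^ k * cos θ, sin θ, 0, 0;
           -sin θ, cos φ ^ k * cos θ, 0, 0]
    ∀ j : ℕ,
      let ψ : Fin 4 → ℝ := ![cos φ ^ j * cos θ, sin θ, 0, 0]
      (Udollar.mulVec ψ 3) ^ 2 =
        C⁻¹ * ((cos φ ^ k - cos φ ^ j) * cos θ * sin θ) ^ 2 :=
  rejection_probability_formula_general θ φ k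
end
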